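/- Let g be an orthogonal transformation of a finite-dimensional real vector space N with inner product, such that g has no nonzero fixed vectors, and let S be a g-invariant symmetric bilinear form on N that is nondegenerate. Decompose N = ⊕_j N^{β_j} into the isotypic components where g acts with eigenvalues e^{±iβ_j}, 0 < β_j ≤ π distinct. Then this decomposition is orthogonal with respect to S, and for each j with β_j ≠ π, both the number of positive and the number of negative eigenvalues of S restricted to N^{β_j} are even. -/

import Mathlib

/-- Number of negative squares (index) of a symmetric bilinear form restricted to a
submodule `p`: the maximal dimension of a subspace of `p` on which it is negative
definite. -/
noncomputable def bilinNegIndex {V : Type*} [AddCommGroup V] [Module ℝ V]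
    (S : LinearMap.BilinForm ℝ V) (p : Submodule ℝ V) : ℕ :=
  sSup {k | ∃ q : Submodule ℝ V, q ≤ p ∧ Module.finrank ℝ q = k ∧
      ∀ x ∈ q, x ≠ 0 → S x x < 0}

/-- Number of positive squares of a symmetric bilinear form restricted to `p`. -/
noncomputable def bilinPosIndex {V : Type*} [AddCommGroup V] [Module ℝ V]
    (S : LinearMap.BilinForm ℝ V) (p : Submodule ℝ V) : ℕ :=
  sSup {k | ∃ q : Submodule ℝ V, q ≤ p ∧ Module.finrank ℝ q = k ∧
      ∀ x ∈ q, x ≠ 0 → 0 < S x x}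


/-!
Since `g` preserves `S`, the operator `g + g⁻¹` is `S`-self-adjoint; it acts on `N^{β_j}` as
the scalar `2 cos β_j`, and these scalars are pairwise distinct, so the blocks are
`S`-orthogonal. For `β_j < π`, `J = (g - cos β_j) / sin β_j` is a complex structure on
`N^{β_j}` which is skew for both `S` and the inner product. So the self-adjoint operator
representing `S` commutes with `J`, the span of its eigenvectors with positive eigenvalue is
`J`-invariant and hence even-dimensional, and that dimension is the positive index of `S`.
The negative index of `S` is the positive index of `-S`.
-/

open Module Submodule

theorem even_finrank_of_apply_apply_eq_neg {K V : Type*} [Field K] [LinearOrder K]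
    [IsStrictOrderedRing K] [AddCommGroup V] [Module K V] [FiniteDimensional K V]
    (J : V →ₗ[K] V) (hJ : ∀ x, J (J x) = -x) : Even (finrank K V) := by
  have hJJ : J ∘ₗ J = (-1 : K) • LinearMap.id := LinearMap.ext fun x => by simp [hJ]
  have hdet : LinearMap.det J * LinearMap.det J = (-1) ^ finrank K V := by
    rw [← LinearMap.det_comp, hJJ, LinearMap.det_smul, LinearMap.det_id, mul_one]
  by_contra hodd
  rw [(Nat.not_even_iff_odd.mp hodd).neg_one_pow] at hdet
  nlinarith [mul_self_nonneg (LinearMap.det J)]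

section Index

variable {V : Type*} [AddCommGroup V] [Module ℝ V]

theorem bilinNegIndex_eq_bilinPosIndex_neg (S : LinearMap.BilinForm ℝ V) (p : Submodule ℝ V) :
    bilinNegIndex S p = bilinPosIndex (-S) p := by
  simp only [bilinNegIndex, bilinPosIndex, LinearMap.neg_apply, neg_pos]

theorem bilinPosIndex_restrict_top (S : LinearMap.BilinForm ℝ V) (p : Submodule ℝ V) :
    bilinPosIndex (S.restrict p) ⊤ = bilinPosIndex S p := by
  unfold bilinPosIndex
  congr 1
  ext k
  constructor
  · rintro ⟨q, -, rfl, hq⟩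
    refine ⟨q.map p.subtype, map_subtype_le p q, finrank_map_subtype_eq p q, ?_⟩
    rintro _ ⟨x, hx, rfl⟩ hx0
    exact hq x hx (by rintro rfl; exact hx0 rfl)
  · rintro ⟨q, hqp, rfl, hq⟩
    refine ⟨q.comap p.subtype, le_top, (comapSubtypeEquivOfLe hqp).finrank_eq, ?_⟩
    intro x hx hx0
    exact hq x hx (by simpa using hx0)

theorem bilinPosIndex_top_eq_finrank_of_isCompl [FiniteDimensional ℝ V]
    (S : LinearMap.BilinForm ℝ V) {E F : Submodule ℝ V} (hEF : IsCompl E F)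
    (hE : ∀ x ∈ E, x ≠ 0 → 0 < S x x) (hF : ∀ x ∈ F, S x x ≤ 0) :
    bilinPosIndex S ⊤ = finrank ℝ E := by
  refine IsGreatest.csSup_eq ⟨⟨E, le_top, rfl, hE⟩, ?_⟩
  rintro _ ⟨q, -, rfl, hq⟩
  have hqF : Disjoint q F := disjoint_def.mpr fun x hxq hxF =>
    by_contra fun hx0 => (hq x hxq hx0).not_ge (hF x hxF)
  have := finrank_add_finrank_le_of_disjoint hqF
  have := finrank_add_eq_of_isCompl hEF
  omega

end Index

section Spectral

open scoped RealInnerProductSpace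

variable {V : Type*} [NormedAddCommGroup V] [InnerProductSpace ℝ V]

theorem OrthonormalBasis.mem_span_image_iff_inner_eq_zero {ι : Type*} [Fintype ι]
    (b : OrthonormalBasis ι ℝ V) {s : Set ι} {x : V} :
    x ∈ span ℝ (b '' s) ↔ ∀ i ∉ s, ⟪b i, x⟫ = 0 := by
  rw [← b.coe_toBasis, b.toBasis.mem_span_image]
  simp only [Set.subset_def, Finset.mem_coe, Finsupp.mem_support_iff,
    OrthonormalBasis.coe_toBasis_repr_apply, OrthonormalBasis.repr_apply_apply]
  exact forall_congr' fun i => not_imp_comm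

variable [FiniteDimensional ℝ V]

theorem exists_inner_map_eq_bilin (B : LinearMap.BilinForm ℝ V) :
    ∃ A : V →ₗ[ℝ] V, ∀ x y, B x y = ⟪A x, y⟫ := by
  let e := stdOrthonormalBasis ℝ V
  refine ⟨∑ i, (B.flip (e i)).smulRight (e i), fun x y => ?_⟩
  simp only [LinearMap.sum_apply, LinearMap.smulRight_apply, sum_inner,
    real_inner_smul_left]
  conv_lhs => rw [← e.sum_repr' y]
  simp only [map_sum, map_smul, smul_eq_mul]
  exact Finset.sum_congr rfl fun i _ => mul_comm _ _

namespace LinearMap.IsSymmetric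

variable {A : V →ₗ[ℝ] V}

theorem inner_map_self_eq_sum (hA : A.IsSymmetric) (x : V) :
    ⟪A x, x⟫ = ∑ i, hA.eigenvalues rfl i * ⟪hA.eigenvectorBasis rfl i, x⟫ ^ 2 := by
  rw [← (hA.eigenvectorBasis rfl).sum_inner_mul_inner]
  refine Finset.sum_congr rfl fun i _ => ?_
  rw [hA, hA.apply_eigenvectorBasis, real_inner_smul_right, real_inner_comm x]
  simp only [Real.ringHom_apply]
  ring

theorem apply_eigenvectorBasis_real (hA : A.IsSymmetric) (i : Fin (finrank ℝ V)) :
    A (hA.eigenvectorBasis rfl i) = hA.eigenvalues rfl i • hA.eigenvectorBasis rfl i := by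
  simp

theorem eigenspace_le_span_eigenvectorBasis (hA : A.IsSymmetric) (ν : ℝ) :
    Module.End.eigenspace A ν ≤
      span ℝ (hA.eigenvectorBasis rfl '' {i | hA.eigenvalues rfl i = ν}) := by
  intro v hv
  rw [OrthonormalBasis.mem_span_image_iff_inner_eq_zero]
  intro i hi
  have h : hA.eigenvalues rfl i * ⟪hA.eigenvectorBasis rfl i, v⟫ =
      ν * ⟪hA.eigenvectorBasis rfl i, v⟫ := by
    rw [← real_inner_smul_left, ← hA.apply_eigenvectorBasis_real, hA,
      Module.End.mem_eigenspace_iff.mp hv, real_inner_smul_right]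
  have h' : (hA.eigenvalues rfl i - ν) * ⟪hA.eigenvectorBasis rfl i, v⟫ = 0 := by
    linear_combination h
  exact (mul_eq_zero.mp h').resolve_left (sub_ne_zero.mpr hi)

noncomputable def posSpectralSubspace (hA : A.IsSymmetric) : Submodule ℝ V :=
  span ℝ (hA.eigenvectorBasis rfl '' {i | 0 < hA.eigenvalues rfl i})

theorem inner_map_self_pos_of_mem_posSpectralSubspace (hA : A.IsSymmetric) {x : V}
    (hx : x ∈ hA.posSpectralSubspace) (hx0 : x ≠ 0) : 0 < ⟪A x, x⟫ := by
  rw [posSpectralSubspace, OrthonormalBasis.mem_span_image_iff_inner_eq_zero] at hx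
  obtain ⟨i, hi⟩ : ∃ i, ⟪hA.eigenvectorBasis rfl i, x⟫ ≠ 0 := by
    by_contra! h
    exact hx0 (by simpa [h] using ((hA.eigenvectorBasis rfl).sum_repr' x).symm)
  rw [hA.inner_map_self_eq_sum]
  refine Finset.sum_pos' (fun j _ => ?_) ⟨i, Finset.mem_univ i, ?_⟩
  · by_cases hj : 0 < hA.eigenvalues rfl j
    · positivity
    · simp [hx j hj]
  · exact mul_pos (by_contra fun h => hi (hx i h)) (by positivity)

theorem inner_map_self_nonpos_of_mem_orthogonal (hA : A.IsSymmetric) {x : V}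
    (hx : x ∈ hA.posSpectralSubspaceᗮ) : ⟪A x, x⟫ ≤ 0 := by
  rw [hA.inner_map_self_eq_sum]
  refine Finset.sum_nonpos fun i _ => ?_
  by_cases hi : 0 < hA.eigenvalues rfl i
  · have hbi : hA.eigenvectorBasis rfl i ∈ hA.posSpectralSubspace := subset_span ⟨i, hi, rfl⟩
    rw [inner_right_of_mem_orthogonal hbi hx]
    simp
  · exact mul_nonpos_of_nonpos_of_nonneg (not_lt.mp hi) (sq_nonneg _)

theorem mapsTo_posSpectralSubspace (hA : A.IsSymmetric) {J : V →ₗ[ℝ] V} (hAJ : Commute A J) :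
    ∀ x ∈ hA.posSpectralSubspace, J x ∈ hA.posSpectralSubspace := by
  intro x hx
  refine (span_le (p := hA.posSpectralSubspace.comap J)).mpr ?_ hx
  rintro _ ⟨i, hi, rfl⟩
  have hJi : J (hA.eigenvectorBasis rfl i) ∈ Module.End.eigenspace A (hA.eigenvalues rfl i) := by
    rw [Module.End.mem_eigenspace_iff, ← Module.End.mul_apply, hAJ.eq, Module.End.mul_apply,
      hA.apply_eigenvectorBasis_real, map_smul]
  have hpos : {j | hA.eigenvalues rfl j = hA.eigenvalues rfl i} ⊆
      {j | 0 < hA.eigenvalues rfl j} := by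
    rintro j (hj : _ = _)
    rwa [Set.mem_ofPred_eq, hj]
  exact span_mono (Set.image_mono hpos) (hA.eigenspace_le_span_eigenvectorBasis _ hJi)

theorem even_bilinPosIndex_of_commute (hA : A.IsSymmetric) (B : LinearMap.BilinForm ℝ V)
    (hB : ∀ x y, B x y = ⟪A x, y⟫) {J : V →ₗ[ℝ] V} (hJ : ∀ x, J (J x) = -x)
    (hAJ : Commute A J) : Even (bilinPosIndex B ⊤) := by
  rw [bilinPosIndex_top_eq_finrank_of_isCompl B hA.posSpectralSubspace.isCompl_orthogonal
    (fun x hx hx0 => hB x x ▸ hA.inner_map_self_pos_of_mem_posSpectralSubspace hx hx0)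
    (fun x hx => hB x x ▸ hA.inner_map_self_nonpos_of_mem_orthogonal hx)]
  exact even_finrank_of_apply_apply_eq_neg (J.restrict (hA.mapsTo_posSpectralSubspace hAJ))
    fun x => Subtype.ext (hJ x)

end LinearMap.IsSymmetric

theorem even_bilinPosIndex_of_isSkew {B : LinearMap.BilinForm ℝ V} (hB : B.IsSymm)
    {J : V →ₗ[ℝ] V} (hJ : ∀ x, J (J x) = -x)
    (hJinner : ∀ x y, ⟪J x, y⟫ = -⟪x, J y⟫)
    (hJB : ∀ x y, B (J x) y = -B x (J y)) : Even (bilinPosIndex B ⊤) := by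
  obtain ⟨A, hAB⟩ := exists_inner_map_eq_bilin B
  have hA : A.IsSymmetric := fun x y => by rw [← hAB, real_inner_comm, ← hAB, hB.eq]
  have hAJ : Commute A J := LinearMap.ext fun x => ext_inner_right ℝ fun y => by
    rw [Module.End.mul_apply, Module.End.mul_apply, ← hAB, hJB, hAB, hJinner]
  exact hA.even_bilinPosIndex_of_commute B hAB hJ hAJ

end Spectral

section Rotation

variable {V : Type*} [AddCommGroup V] [Module ℝ V] (g : V →ₗ[ℝ] V) {c : ℝ}

theorem apply_map_add_apply_map_eq {F : LinearMap.BilinForm ℝ V}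
    (hF : ∀ u v, F (g u) (g v) = F u v) (x : V) {y : V}
    (hy : g (g y) - (2 * c) • g y + y = 0) :
    F (g x) y + F x (g y) = 2 * c * F x y := by
  have hgy : g ((2 * c) • y - g y) = y := by
    rw [map_sub, map_smul]
    linear_combination (norm := module) -hy
  nth_rewrite 1 [← hgy]
  rw [hF, map_sub, map_smul, smul_eq_mul]
  ring

theorem apply_eq_zero_of_coeff_ne {F : LinearMap.BilinForm ℝ V}
    (hF : ∀ u v, F (g u) (g v) = F u v) {c' : ℝ} (hc : c ≠ c') {x y : V}
    (hx : g (g x) - (2 * c) • g x + x = 0) (hy : g (g y) - (2 * c') • g y + y = 0) :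
    F x y = 0 := by
  have h := apply_map_add_apply_map_eq g hF x hy
  have h' := apply_map_add_apply_map_eq g (F := LinearMap.flip F) (fun u v => hF v u) y hx
  simp only [LinearMap.flip_apply] at h'
  have : (c - c') * F x y = 0 := by linear_combination (h - h') / 2
  exact (mul_eq_zero.mp this).resolve_left (sub_ne_zero.mpr hc)

/-- Where `g² - 2c g + 1 = 0` and `s² + c² = 1`, this is the complex structure `J` with
`g = c + s J`. -/
noncomputable def rotationComplexStructure (c s : ℝ) : V →ₗ[ℝ] V :=
  s⁻¹ • (g - c • LinearMap.id)

theorem rotationComplexStructure_apply (c s : ℝ) (x : V) :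
    rotationComplexStructure g c s x = s⁻¹ • (g x - c • x) := rfl

theorem rotationComplexStructure_apply_apply {s : ℝ} (hs : s ≠ 0) (hsc : s ^ 2 + c ^ 2 = 1)
    {x : V} (hx : g (g x) - (2 * c) • g x + x = 0) :
    rotationComplexStructure g c s (rotationComplexStructure g c s x) = -x := by
  simp only [rotationComplexStructure_apply, map_smul, map_sub]
  linear_combination (norm := skip) s⁻¹ ^ 2 • hx
  match_scalars <;> field_simp <;> linarith

theorem apply_rotationComplexStructure {F : LinearMap.BilinForm ℝ V}
    (hF : ∀ u v, F (g u) (g v) = F u v) (c s : ℝ) (x : V) {y : V}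
    (hy : g (g y) - (2 * c) • g y + y = 0) :
    F (rotationComplexStructure g c s x) y = -F x (rotationComplexStructure g c s y) := by
  have h := apply_map_add_apply_map_eq g hF x hy
  simp only [rotationComplexStructure_apply, map_smul, map_sub, LinearMap.smul_apply,
    LinearMap.sub_apply, smul_eq_mul]
  linear_combination s⁻¹ * h

end Rotation

theorem even_bilinPosIndex_of_rotation {V : Type*} [NormedAddCommGroup V]
    [InnerProductSpace ℝ V] [FiniteDimensional ℝ V] (g : V →ₗᵢ[ℝ] V)
    {F : LinearMap.BilinForm ℝ V} (hF : F.IsSymm) (hFg : ∀ u v, F (g u) (g v) = F u v)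
    {p : Submodule ℝ V} (hp : ∀ x ∈ p, g x ∈ p) {c : ℝ}
    (hc : c ^ 2 < 1) (hg : ∀ x ∈ p, g (g x) - (2 * c) • g x + x = 0) :
    Even (bilinPosIndex F p) := by
  set s := √(1 - c ^ 2)
  have hs : s ≠ 0 := (Real.sqrt_pos.mpr (by linarith)).ne'
  have hsc : s ^ 2 + c ^ 2 = 1 := by rw [Real.sq_sqrt (by linarith)]; ring
  set J := rotationComplexStructure g.toLinearMap c s
  have hJp : ∀ x ∈ p, J x ∈ p := fun x hx =>
    p.smul_mem _ (p.sub_mem (hp x hx) (p.smul_mem c hx))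
  rw [← bilinPosIndex_restrict_top]
  exact even_bilinPosIndex_of_isSkew (hF.restrict p) (J := J.restrict hJp)
    (fun x => Subtype.ext (rotationComplexStructure_apply_apply _ hs hsc (hg x x.2)))
    (fun x y =>
      apply_rotationComplexStructure _ (F := innerₗ V) g.inner_map_map c s x (hg y y.2))
    (fun x y => apply_rotationComplexStructure _ hFg c s x (hg y y.2))

theorem stmt_11_general (N : Type*) [NormedAddCommGroup N] [InnerProductSpace ℝ N]
    [FiniteDimensional ℝ N]
    (g : N ≃ₗᵢ[ℝ] N)
    (S : LinearMap.BilinForm ℝ N) (hsymm : S.IsSymm)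
    (hinv : ∀ u v, S (g u) (g v) = S u v)
    (ι : Type*) (β : ι → ℝ)
    (hβ : ∀ j, 0 < β j ∧ β j ≤ Real.pi) (hβinj : Function.Injective β)
    (Nc : ι → Submodule ℝ N)
    (hNg : ∀ j, ∀ x ∈ Nc j, g x ∈ Nc j)
    (hmin : ∀ j, ∀ x ∈ Nc j, g (g x) - (2 * Real.cos (β j)) • g x + x = 0) :
    (∀ j k, j ≠ k → ∀ u ∈ Nc j, ∀ v ∈ Nc k, S u v = 0) ∧
    (∀ j, β j ≠ Real.pi →
      Even (bilinPosIndex S (Nc j)) ∧ Even (bilinNegIndex S (Nc j))) := by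
  have hcos_inj : Function.Injective fun j => Real.cos (β j) := fun j k h =>
    hβinj (Real.injOn_cos ⟨(hβ j).1.le, (hβ j).2⟩ ⟨(hβ k).1.le, (hβ k).2⟩ h)
  refine ⟨fun j k hjk u hu v hv => apply_eq_zero_of_coeff_ne g.toLinearMap hinv
    (hcos_inj.ne hjk) (hmin j u hu) (hmin k v hv), fun j hj => ?_⟩
  have hcos : Real.cos (β j) ^ 2 < 1 := by
    have := Real.sin_pos_of_pos_of_lt_pi (hβ j).1 ((hβ j).2.lt_of_ne hj)
    nlinarith [Real.sin_sq_add_cos_sq (β j)]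
  have hneg : ∀ u v, (-S) (g u) (g v) = (-S) u v := by simp [hinv]
  rw [bilinNegIndex_eq_bilinPosIndex_neg]
  exact ⟨even_bilinPosIndex_of_rotation g.toLinearIsometry hsymm hinv (hNg j) hcos (hmin j),
    even_bilinPosIndex_of_rotation g.toLinearIsometry hsymm.neg hneg (hNg j) hcos (hmin j)⟩

/-- let g be an orthogonal transformation of a finite-dimensional real
inner product space N with no nonzero fixed vectors, and S a g-invariant nondegenerate
symmetric bilinear form.  If N = ⊕_j N^{β_j} is the isotypic decomposition where g acts
on N^{β_j} with (complexified) eigenvalues e^{±iβ_j}, the β_j ∈ (0, π] pairwise distinct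
(expressed by g² - 2cos(β_j) g + 1 = 0 on N^{β_j}), then the decomposition is
S-orthogonal, and for β_j ≠ π both the positive and the negative index of S|_{N^{β_j}}
are even. -/
theorem stmt_11 (N : Type*) [NormedAddCommGroup N] [InnerProductSpace ℝ N]
    [FiniteDimensional ℝ N]
    (g : N ≃ₗᵢ[ℝ] N) (hfix : ∀ x : N, g x = x → x = 0)
    (S : LinearMap.BilinForm ℝ N) (hsymm : S.IsSymm) (hnd : S.Nondegenerate)
    (hinv : ∀ u v, S (g u) (g v) = S u v)
    (ι : Type*) [Fintype ι] [DecidableEq ι] (β : ι → ℝ)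
    (hβ : ∀ j, 0 < β j ∧ β j ≤ Real.pi) (hβinj : Function.Injective β)
    (Nc : ι → Submodule ℝ N)
    (hNg : ∀ j, ∀ x ∈ Nc j, g x ∈ Nc j)
    (hmin : ∀ j, ∀ x ∈ Nc j, g (g x) - (2 * Real.cos (β j)) • g x + x = 0)
    (hint : DirectSum.IsInternal Nc) :
    (∀ j k, j ≠ k → ∀ u ∈ Nc j, ∀ v ∈ Nc k, S u v = 0) ∧
    (∀ j, β j ≠ Real.pi →
      Even (bilinPosIndex S (Nc j)) ∧ Even (bilinNegIndex S (Nc j))) :=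
  stmt_11_general N g S hsymm hinv ι β hβ hβinj Nc hNg hmin
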